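/- (Exact recursion for Fourier coefficients) Let S be the injective n-tuples in (ℤ/nℤ)ⁿ, let 1 ≤ m ≤ n, and let r₁,…,r_m ∈ (1/n)ℤ/ℤ with r_m ≠ 0. Then \widehat{1_S}(r₁,…,r_m,0,…,0) = −(1/(n−m+1)) ∑_{i=1}^{m−1} \widehat{1_S}(r₁,…,rᵢ+r_m,…,r_{m−1},0,…,0), where on the right rᵢ is replaced by rᵢ + r_m and the coordinate r_m is removed. -/

import Mathlib

open Finset

/-- `e(x) = exp(2πi x/n)` for `x ∈ ZMod n`, realizing the identification of the dual of
`ZMod n` with `(1/n)ℤ/ℤ`. -/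
noncomputable def eZ (n : ℕ) (x : ZMod n) : ℂ :=
  Complex.exp (2 * Real.pi * Complex.I * (x.val : ℂ) / (n : ℂ))

/-- The Fourier coefficient `\widehat{1_S}(r₁,…,r_n)` of the set `S` of injective
`n`-tuples in `(ZMod n)ⁿ`, namely `n^{-n} ∑_{x ∈ S} e(-∑ᵢ rᵢ xᵢ)`. -/
noncomputable def fourierS (n : ℕ) [NeZero n] (r : Fin n → ZMod n) : ℂ :=
  ((n : ℂ) ^ n)⁻¹ *
    ∑ x ∈ Finset.univ.filter (fun x : Fin n → ZMod n => Function.Injective x),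
      eZ n (-(∑ i, r i * x i))

/-- The Fourier coefficient `\widehat{1_S}(r₁,…,r_m,0,…,0)`, for `r` an `m`-tuple of
frequencies padded with zeros. -/
noncomputable def fourierSparse (n m : ℕ) [NeZero n] (r : Fin m → ZMod n) : ℂ :=
  fourierS n (fun i => if h : (i : ℕ) < m then r ⟨i, h⟩ else 0)

/-! Write `s` for the zero-padded `(r₁, …, r_m)`, `c = r_{m+1} ≠ 0`, and
`f k = \widehat{1_S}(s + c·e_k)`. Summing over `k` before summing over `x ∈ S`, each injective
`x : Fin n → ZMod n` is a bijection, so `∑ₖ e(-c xₖ)` is a complete sum of the nontrivial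
character `y ↦ e(-c y)` and vanishes; hence `∑ₖ f k = 0`. Permuting coordinates preserves `S`,
so `f k = f k'` whenever `s k = s k'`: on the `n - m` indices `k ≥ m`, where `s` vanishes, `f`
equals the left-hand side, and the indices `k < m` give the terms on the right. -/

open Function

lemma eZ_eq_stdAddChar (n : ℕ) [NeZero n] (x : ZMod n) : eZ n x = ZMod.stdAddChar x := by
  rw [ZMod.stdAddChar_apply, ZMod.toCircle_apply, eZ]

lemma sum_stdAddChar_comp_injective_mul {n : ℕ} [NeZero n] {x : Fin n → ZMod n}
    (hx : Injective x) {c : ZMod n} (hc : c ≠ 0) :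
    ∑ k, ZMod.stdAddChar (x k * c) = 0 := by
  have hbij : Bijective x := (Fintype.bijective_iff_injective_and_card x).mpr ⟨hx, by simp⟩
  rw [hbij.sum_comp (fun y => ZMod.stdAddChar (y * c)),
    AddChar.sum_mulShift c (ZMod.isPrimitive_stdAddChar n), if_neg hc, Nat.cast_zero]

def zeroPad {R : Type*} [Zero R] {m n : ℕ} (r : Fin m → R) : Fin n → R :=
  fun i => if h : (i : ℕ) < m then r ⟨i, h⟩ else 0

section zeroPad

variable {R : Type*} {m n : ℕ}

lemma zeroPad_of_le [Zero R] (r : Fin m → R) {k : Fin n} (hk : m ≤ k) : zeroPad r k = 0 :=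
  dif_neg hk.not_gt

lemma zeroPad_eq_zeroPad_castSucc_add_single [AddZeroClass R] (h : m + 1 ≤ n)
    (r : Fin (m + 1) → R) :
    (zeroPad r : Fin n → R) = zeroPad (r ∘ Fin.castSucc) + Pi.single ⟨m, h⟩ (r (Fin.last m)) := by
  ext k
  simp only [zeroPad, Pi.add_apply, Pi.single_apply, Fin.ext_iff, comp_apply]
  split_ifs <;> first | omega | simp_all [Fin.last]

lemma zeroPad_add_single [AddZeroClass R] (h : m ≤ n) (r : Fin m → R) (i : Fin m) (c : R) :
    (zeroPad (r + Pi.single i c) : Fin n → R) = zeroPad r + Pi.single (Fin.castLE h i) c := by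
  ext k
  simp only [zeroPad, Pi.add_apply, Pi.single_apply, Fin.ext_iff, Fin.val_castLE]
  split_ifs <;> first | omega | simp_all

end zeroPad

lemma sum_eq_sum_castLE_add_nsmul {M : Type*} [AddCommMonoid M] {m n : ℕ} (h : m ≤ n)
    (f : Fin n → M) (k₀ : Fin n) (hf : ∀ k : Fin n, m ≤ (k : ℕ) → f k = f k₀) :
    ∑ k, f k = ∑ i : Fin m, f (Fin.castLE h i) + (n - m) • f k₀ := by
  have hlt : univ.filter (fun k : Fin n => (k : ℕ) < m) = univ.map (Fin.castLEEmb h) := by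
    ext k
    simp only [mem_filter, mem_univ, true_and, mem_map, Fin.castLEEmb_apply]
    exact ⟨fun hk => ⟨⟨k, hk⟩, rfl⟩, by rintro ⟨i, rfl⟩; exact i.isLt⟩
  have hcard : (univ.filter (fun k : Fin n => ¬ (k : ℕ) < m)).card = n - m := by
    have := card_filter_add_card_filter_not (s := univ) (fun k : Fin n => (k : ℕ) < m)
    rw [hlt, card_map, card_univ, card_univ, Fintype.card_fin, Fintype.card_fin] at this
    omega
  rw [← sum_filter_add_sum_filter_not univ (fun k : Fin n => (k : ℕ) < m), hlt, sum_map,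
    sum_congr rfl fun k hk => hf k (not_lt.mp (mem_filter.mp hk).2), sum_const, hcard]
  rfl

lemma fourierSparse_eq_fourierS_zeroPad (n m : ℕ) [NeZero n] (r : Fin m → ZMod n) :
    fourierSparse n m r = fourierS n (zeroPad r) := rfl

section fourierS

variable {n : ℕ} [NeZero n]

lemma fourierS_comp_perm (s : Fin n → ZMod n) (σ : Equiv.Perm (Fin n)) :
    fourierS n (s ∘ σ) = fourierS n s := by
  unfold fourierS
  congr 1
  refine sum_nbij' (· ∘ σ.symm) (· ∘ σ) (fun x hx => ?_) (fun x hx => ?_)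
    (fun x _ => by simp [comp_assoc]) (fun x _ => by simp [comp_assoc]) (fun x _ => ?_)
  · simpa [EquivLike.injective_comp] using hx
  · simpa [EquivLike.injective_comp] using hx
  · rw [← Equiv.sum_comp σ (fun i => s i * (x ∘ σ.symm) i)]
    simp

lemma fourierS_add_single_eq_of_eq (s : Fin n → ZMod n) (c : ZMod n) {k k' : Fin n}
    (h : s k = s k') :
    fourierS n (s + Pi.single k c) = fourierS n (s + Pi.single k' c) := by
  rw [← fourierS_comp_perm _ (Equiv.swap k k')]
  congr 1
  ext i
  simp only [comp_apply, Pi.add_apply, Equiv.swap_apply_def, Pi.single_apply]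
  split_ifs <;> simp_all

lemma sum_fourierS_add_single (s : Fin n → ZMod n) {c : ZMod n} (hc : c ≠ 0) :
    ∑ k, fourierS n (s + Pi.single k c) = 0 := by
  simp only [fourierS, ← mul_sum]
  rw [sum_comm]
  refine mul_eq_zero_of_right _ (sum_eq_zero fun x hx => ?_)
  have hsplit : ∀ k, eZ n (-∑ i, (s + Pi.single k c : Fin n → ZMod n) i * x i) =
      ZMod.stdAddChar (-∑ i, s i * x i) * ZMod.stdAddChar (x k * -c) := by
    intro k
    simp only [eZ_eq_stdAddChar, ← AddChar.map_add_eq_mul, Pi.add_apply, add_mul,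
      sum_add_distrib, Pi.single_apply, ite_mul, zero_mul, sum_ite_eq', mem_univ, if_true]
    congr 1
    ring
  rw [sum_congr rfl fun k _ => hsplit k, ← mul_sum,
    sum_stdAddChar_comp_injective_mul (mem_filter.mp hx).2 (neg_ne_zero.mpr hc), mul_zero]

end fourierS

/-- Exact recursion: if `r_{m+1} ≠ 0` then
`\widehat{1_S}(r₁,…,r_{m+1},0,…,0)
  = −(1/(n−m)) ∑_{i=1}^{m} \widehat{1_S}(r₁,…,rᵢ+r_{m+1},…,r_m,0,…,0)`. -/
theorem fourierSparse_recursion (n m : ℕ) [NeZero n] (h : m + 1 ≤ n)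
    (r : Fin (m + 1) → ZMod n) (hr : r (Fin.last m) ≠ 0) :
    fourierSparse n (m + 1) r =
      -(1 / ((n : ℂ) - (m : ℂ))) * ∑ i : Fin m,
        fourierSparse n m
          (fun j => r j.castSucc + if j = i then r (Fin.last m) else 0) := by
  have hmn : m ≤ n := by omega
  set s : Fin n → ZMod n := zeroPad (r ∘ Fin.castSucc)
  set f : Fin n → ℂ := fun k => fourierS n (s + Pi.single k (r (Fin.last m)))
  have hlhs : fourierSparse n (m + 1) r = f ⟨m, h⟩ := by
    rw [fourierSparse_eq_fourierS_zeroPad, zeroPad_eq_zeroPad_castSucc_add_single h]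
  have hrhs (i : Fin m) : fourierSparse n m
      (fun j => r j.castSucc + if j = i then r (Fin.last m) else 0) = f (Fin.castLE hmn i) := by
    have hupd : (fun j => r j.castSucc + if j = i then r (Fin.last m) else 0) =
        r ∘ Fin.castSucc + Pi.single i (r (Fin.last m)) := by
      ext j; simp [Pi.single_apply]
    rw [fourierSparse_eq_fourierS_zeroPad, hupd, zeroPad_add_single hmn]
  have hsum : ∑ i : Fin m, f (Fin.castLE hmn i) + (n - m) • f ⟨m, h⟩ = 0 := by
    rw [← sum_eq_sum_castLE_add_nsmul hmn f ⟨m, h⟩ fun k hk =>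
      fourierS_add_single_eq_of_eq s _ ((zeroPad_of_le _ hk).trans (zeroPad_of_le _ le_rfl).symm)]
    exact sum_fourierS_add_single s hr
  have hnm : (n : ℂ) - m ≠ 0 := by
    rw [← Nat.cast_sub hmn]; exact_mod_cast (Nat.sub_pos_of_lt h).ne'
  rw [nsmul_eq_mul, Nat.cast_sub hmn] at hsum
  simp only [hlhs, hrhs]
  field_simp
  linear_combination hsum
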